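/- Under the Dawid–Skene model with a decomposable aggregation rule: for every ε ∈ (0,1), if t̄ ≥ sqrt(2·ln((L−1)/ε)), then with probability at least 1 − exp(−N·D(ε ‖ (L−1)·φ(t̄))) the error rate satisfies E_N ≤ ε. -/

import Mathlib

open MeasureTheory ProbabilityTheory Real

noncomputable section

namespace CrowdDS

/-- Conditional law of the label `Z i j` (valued in `Fin (L+1)`, `0` = missing) given the
true label `y j = k`, under the general Dawid–Skene model with assignment probabilities `q`
and confusion matrices `p` (where `p i k h` is the probability of reporting label `h.succ`
given true label `k`). -/
def condLaw {M N L : ℕ} (q : Fin M → Fin N → ℝ) (p : Fin M → Fin L → Fin L → ℝ)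
    (i : Fin M) (j : Fin N) (k : Fin L) (h : Fin (L + 1)) : ℝ :=
  if hz : h = 0 then 1 - q i j else q i j * p i k (h.pred hz)

/-- The normalizing quantity `N̄`. -/
def nbar {M L : ℕ} (f : Fin M → Fin L → Fin (L + 1) → ℝ) : ℝ :=
  Real.sqrt (∑ i, (sSup {x : ℝ | ∃ k l h : Fin L, k ≠ l ∧
    x = |f i k h.succ - f i l h.succ|}) ^ 2)

/-- Expected gap `Δ_j(k,l)` of the aggregated scores. -/
def gap {M N L : ℕ} (f : Fin M → Fin L → Fin (L + 1) → ℝ) (a : Fin L → ℝ)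
    (q : Fin M → Fin N → ℝ) (p : Fin M → Fin L → Fin L → ℝ)
    (j : Fin N) (k l : Fin L) : ℝ :=
  (∑ i, ∑ h : Fin L, q i j * (f i k h.succ - f i l h.succ) * p i k h) + (a k - a l)

/-- `τ_j^min`. -/
def tauMin {M N L : ℕ} (f : Fin M → Fin L → Fin (L + 1) → ℝ) (a : Fin L → ℝ)
    (q : Fin M → Fin N → ℝ) (p : Fin M → Fin L → Fin L → ℝ) (j : Fin N) : ℝ :=
  sInf {x : ℝ | ∃ k l : Fin L, k ≠ l ∧ x = gap f a q p j k l / nbar f}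

/-- `τ_j^max`. -/
def tauMax {M N L : ℕ} (f : Fin M → Fin L → Fin (L + 1) → ℝ) (a : Fin L → ℝ)
    (q : Fin M → Fin N → ℝ) (p : Fin M → Fin L → Fin L → ℝ) (j : Fin N) : ℝ :=
  sSup {x : ℝ | ∃ k l : Fin L, k ≠ l ∧ x = gap f a q p j k l / nbar f}

/-- `t̄ = min_j τ_j^min`. -/
def tbar {M N L : ℕ} (f : Fin M → Fin L → Fin (L + 1) → ℝ) (a : Fin L → ℝ)
    (q : Fin M → Fin N → ℝ) (p : Fin M → Fin L → Fin L → ℝ) : ℝ :=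
  sInf {x : ℝ | ∃ j : Fin N, x = tauMin f a q p j}

/-- `t̃ = max_j τ_j^max`. -/
def ttil {M N L : ℕ} (f : Fin M → Fin L → Fin (L + 1) → ℝ) (a : Fin L → ℝ)
    (q : Fin M → Fin N → ℝ) (p : Fin M → Fin L → Fin L → ℝ) : ℝ :=
  sSup {x : ℝ | ∃ j : Fin N, x = tauMax f a q p j}

/-- The constant `c`. -/
def cConst {M L : ℕ} (f : Fin M → Fin L → Fin (L + 1) → ℝ) : ℝ :=
  (1 / nbar f) * sSup {x : ℝ | ∃ (i : Fin M) (k l h : Fin L), k ≠ l ∧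
    x = |f i k h.succ - f i l h.succ|}

/-- The variance proxy `σ²`. -/
def sigmaSq {M N L : ℕ} (f : Fin M → Fin L → Fin (L + 1) → ℝ)
    (q : Fin M → Fin N → ℝ) (p : Fin M → Fin L → Fin L → ℝ) : ℝ :=
  (1 / (nbar f) ^ 2) * sSup {x : ℝ | ∃ (j : Fin N) (k l : Fin L), k ≠ l ∧
    x = ∑ i, ∑ h : Fin L, q i j * (f i k h.succ - f i l h.succ) ^ 2 * p i k h}

/-- The error rate `E_N`. -/
def errRate {Ω : Type*} {N L : ℕ} (y yhat : Fin N → Ω → Fin L) (ω : Ω) : ℝ :=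
  (N : ℝ)⁻¹ * ∑ j, if yhat j ω ≠ y j ω then (1 : ℝ) else 0

/-- `φ(x) = exp(−x²/2)`. -/
def phi (x : ℝ) : ℝ := Real.exp (-x ^ 2 / 2)

/-- Kullback–Leibler divergence between Bernoulli distributions. -/
def klBer (x y : ℝ) : ℝ := x * Real.log (x / y) + (1 - x) * Real.log ((1 - x) / (1 - y))

end CrowdDS

/-!
Fix an item `j` with true label `k` and a wrong label `l`. Given `y j = k` the worker labels
are independent with laws `condLaw q p i j k`, so `s_j(l) - s_j(k)` is a sum of independent
terms, the `i`-th bounded in absolute value by `max_h |f i k h - f i l h|`, with mean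
`-Δ_j(k,l)`. Hoeffding's inequality bounds the probability that `l` scores at least as high
as `k` by `φ(Δ_j(k,l) / N̄) ≤ φ(t̄)`, and a union bound over the `L - 1` wrong labels shows
that each item is misclassified with probability at most `ρ = (L - 1) φ(t̄) ≤ ε`. The items
are independent, so the Chernoff bound for a sum of independent indicators with means at most
`ρ`, at the optimal exponent, gives `P(N E_N ≥ N ε) ≤ exp(-N D(ε ‖ ρ))`.
-/

namespace CrowdDS

section WeightMeasure

variable {S : Type*} [Fintype S] [MeasurableSpace S] {w : S → ℝ}

def weightMeasure (w : S → ℝ) : Measure S := ∑ s, (w s).toNNReal • Measure.dirac s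

instance : IsFiniteMeasure (weightMeasure w) := by
  unfold weightMeasure
  infer_instance

lemma isProbabilityMeasure_weightMeasure (hw0 : ∀ s, 0 ≤ w s) (hw1 : ∑ s, w s = 1) :
    IsProbabilityMeasure (weightMeasure w) := by
  constructor
  simp only [weightMeasure, Measure.coe_finsetSum, Measure.coe_smul, Finset.sum_apply,
    Pi.smul_apply, measure_univ, ENNReal.smul_def, smul_eq_mul, mul_one]
  change ∑ s, ENNReal.ofReal (w s) = 1
  rw [← ENNReal.ofReal_sum_of_nonneg fun s _ => hw0 s, hw1, ENNReal.ofReal_one]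

variable [MeasurableSingletonClass S]

lemma weightMeasure_real_singleton (hw0 : ∀ s, 0 ≤ w s) (s : S) :
    (weightMeasure w).real {s} = w s := by
  classical
  simp [weightMeasure, Measure.real, Pi.single_apply, hw0 s]

lemma integral_weightMeasure (hw0 : ∀ s, 0 ≤ w s) (F : S → ℝ) :
    ∫ x, F x ∂weightMeasure w = ∑ s, w s * F s := by
  rw [weightMeasure, integral_finsetSum_measure fun s _ => Integrable.of_finite]
  simp [NNReal.smul_def, hw0]

end WeightMeasure

theorem measureReal_pi_sum_sub_integral_ge_le {ι : Type*} [Fintype ι] {S : ι → Type*}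
    [∀ i, MeasurableSpace (S i)] (ν : ∀ i, Measure (S i)) [∀ i, IsProbabilityMeasure (ν i)]
    {g : ∀ i, S i → ℝ} (hg : ∀ i, Measurable (g i)) {c : ι → ℝ}
    (hgc : ∀ i x, |g i x| ≤ c i) {Δ : ℝ} (hΔ : 0 ≤ Δ) :
    (Measure.pi ν).real {x | Δ ≤ ∑ i, (g i (x i) - ∫ s, g i s ∂ν i)}
      ≤ exp (-Δ ^ 2 / (2 * ∑ i, c i ^ 2)) := by
  have hsubG : ∀ i, HasSubgaussianMGF (fun s => g i s - ∫ s, g i s ∂ν i)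
      ((‖c i - -c i‖₊ / 2) ^ 2) (ν i) := fun i =>
    hasSubgaussianMGF_of_mem_Icc (hg i).aemeasurable
      (ae_of_all _ fun s => abs_le.1 (hgc i s))
  have hX : ∀ i, HasSubgaussianMGF (fun x : ∀ i, S i => g i (x i) - ∫ s, g i s ∂ν i)
      ((‖c i - -c i‖₊ / 2) ^ 2) (Measure.pi ν) := fun i =>
    HasSubgaussianMGF.of_map (measurable_pi_apply i).aemeasurable
      (by rw [(measurePreserving_eval ν i).map_eq]; exact hsubG i)
  have hindep := iIndepFun_pi (μ := ν) (X := fun i s => g i s - ∫ s, g i s ∂ν i)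
    fun i => ((hg i).sub_const _).aemeasurable
  convert HasSubgaussianMGF.measure_sum_ge_le_of_iIndepFun hindep (s := Finset.univ)
    (fun i _ => hX i) hΔ using 4
  push_cast
  refine Finset.sum_congr rfl fun i _ => ?_
  rw [Real.norm_eq_abs, sub_neg_eq_add, ← two_mul, abs_mul, abs_two,
    mul_div_cancel_left₀ _ two_ne_zero, sq_abs]

lemma exp_neg_mul_add_mul_exp_eq_exp_neg_klBer {ρ ε : ℝ} (hρ0 : 0 < ρ) (hρ1 : ρ < 1)
    (hε0 : 0 < ε) (hε1 : ε < 1) (t : ℝ) (ht : t = log (ε * (1 - ρ) / ((1 - ε) * ρ))) :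
    exp (-t * ε) * (1 - ρ + ρ * exp t) = exp (-klBer ε ρ) := by
  have h1ε : 0 < 1 - ε := by linarith
  have h1ρ : 0 < 1 - ρ := by linarith
  have hmgf : 1 - ρ + ρ * exp t = exp (log ((1 - ρ) / (1 - ε))) := by
    rw [ht, exp_log (by positivity), exp_log (by positivity)]
    field_simp
    ring
  rw [hmgf, ← exp_add, ht, klBer, log_div (by positivity) (by positivity),
    log_mul hε0.ne' h1ρ.ne', log_mul h1ε.ne' hρ0.ne', log_div hε0.ne' hρ0.ne',
    log_div h1ε.ne' h1ρ.ne', log_div h1ρ.ne' h1ε.ne']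
  ring_nf

section Bernoulli

variable {Ω : Type*} [MeasurableSpace Ω] {μ : Measure Ω}

lemma mgf_indicator_one [IsProbabilityMeasure μ] {E : Set Ω} (hE : MeasurableSet E) (t : ℝ) :
    mgf (E.indicator 1) μ t = 1 + (exp t - 1) * μ.real E := by
  have hexp : (fun ω => exp (t * E.indicator 1 ω))
      = fun ω => 1 + E.indicator (fun _ => exp t - 1) ω := by
    ext ω
    by_cases hω : ω ∈ E <;> simp [hω]
  rw [mgf, hexp, integral_add (integrable_const _) ((integrable_const _).indicator hE),
    integral_indicator_const _ hE]
  simp [mul_comm]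

lemma one_sub_measureReal_le_of_compl_subset [IsProbabilityMeasure μ] {s t : Set Ω}
    (h : sᶜ ⊆ t) : 1 - μ.real t ≤ μ.real s := by
  have hunion := measureReal_union_le (μ := μ) s sᶜ
  rw [Set.union_compl_self, probReal_univ] at hunion
  linarith [measureReal_mono h (μ := μ)]

theorem measureReal_sum_indicator_ge_le_exp_klBer {ι : Type*} [Fintype ι] {E : ι → Set Ω}
    (hE : ∀ j, MeasurableSet (E j))
    (hindep : iIndepFun (fun j => (E j).indicator (1 : Ω → ℝ)) μ) {ρ ε : ℝ}
    (hEρ : ∀ j, μ.real (E j) ≤ ρ) (hρ : 0 < ρ) (hρε : ρ ≤ ε) (hε : ε < 1) :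
    μ.real {ω | Fintype.card ι * ε ≤ ∑ j, (E j).indicator 1 ω}
      ≤ exp (-(Fintype.card ι) * klBer ε ρ) := by
  have := hindep.isProbabilityMeasure
  -- the exponent minimising the Chernoff bound `exp (-t ε) * (1 - ρ + ρ * exp t)`
  set t := log (ε * (1 - ρ) / ((1 - ε) * ρ)) with ht
  have ht0 : 0 ≤ t := log_nonneg <| by
    rw [le_div_iff₀ (mul_pos (by linarith) hρ)]
    nlinarith
  have hmeas : ∀ j, Measurable ((E j).indicator (1 : Ω → ℝ)) :=
    fun j => measurable_const.indicator (hE j)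
  have hbound :
      ∀ ω, ∑ j, (E j).indicator (1 : Ω → ℝ) ω ∈ Set.Icc 0 (Fintype.card ι : ℝ) :=
    fun ω => ⟨Finset.sum_nonneg fun j _ => Set.indicator_nonneg (fun _ _ => zero_le_one) ω,
      (Finset.sum_le_card_nsmul _ _ 1 fun j _ =>
        Set.indicator_le_self' (fun _ _ => zero_le_one) ω).trans_eq (by simp)⟩
  have hint : Integrable (fun ω => exp (t * ∑ j, (E j).indicator (1 : Ω → ℝ) ω)) μ :=
    integrable_exp_mul_of_mem_Icc (by fun_prop) (ae_of_all _ hbound)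
  calc μ.real {ω | Fintype.card ι * ε ≤ ∑ j, (E j).indicator 1 ω}
      ≤ exp (-t * (Fintype.card ι * ε)) * mgf (∑ j, (E j).indicator 1) μ t := by
        simpa only [Finset.sum_fn] using measure_ge_le_exp_mul_mgf _ ht0 hint
    _ = exp (-t * (Fintype.card ι * ε)) * ∏ j, (1 + (exp t - 1) * μ.real (E j)) := by
        rw [hindep.mgf_sum hmeas]
        simp only [mgf_indicator_one (hE _)]
    _ ≤ exp (-t * (Fintype.card ι * ε)) * ∏ j : ι, (1 + (exp t - 1) * ρ) := by
        have het : 0 ≤ exp t - 1 := by linarith [one_le_exp ht0]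
        gcongr with j
        exact hEρ j
    _ = (exp (-t * ε) * (1 - ρ + ρ * exp t)) ^ Fintype.card ι := by
        rw [Finset.prod_const, Finset.card_univ, mul_pow, ← exp_nat_mul]
        ring_nf
    _ = exp (-(Fintype.card ι) * klBer ε ρ) := by
        rw [exp_neg_mul_add_mul_exp_eq_exp_neg_klBer hρ (by linarith) (by linarith) hε t ht,
          ← exp_nat_mul]
        ring_nf

end Bernoulli

lemma phi_le_phi {x y : ℝ} (hx : 0 ≤ x) (hxy : x ≤ y) : phi y ≤ phi x := by
  unfold phi
  gcongr

lemma pos_of_sqrt_two_log_le {A ε T : ℝ} (hε : 0 < ε) (hεA : ε < A)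
    (h : √(2 * log (A / ε)) ≤ T) : 0 < T :=
  (Real.sqrt_pos.2 (mul_pos two_pos (log_pos ((one_lt_div hε).2 hεA)))).trans_le h

lemma mul_phi_le_of_sqrt_two_log_le {A ε T : ℝ} (hA : 0 < A) (hε : 0 < ε)
    (h : √(2 * log (A / ε)) ≤ T) : A * phi T ≤ ε := by
  have hT : 2 * log (A / ε) ≤ T ^ 2 := (Real.sqrt_le_iff.1 h).2
  have hphi : phi T ≤ ε / A := calc
    phi T ≤ exp (-log (A / ε)) := exp_le_exp.2 (by linarith)
    _ = ε / A := by rw [exp_neg, exp_log (div_pos hA hε), inv_div]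
  calc A * phi T ≤ A * (ε / A) := by gcongr
    _ = ε := mul_div_cancel₀ ε hA.ne'

lemma errRate_le_inv_mul_sum_indicator {Ω : Type*} {N L : ℕ} {y yhat : Fin N → Ω → Fin L}
    {E : Fin N → Set Ω} (hE : ∀ j ω, yhat j ω ≠ y j ω → ω ∈ E j) (ω : Ω) :
    errRate y yhat ω ≤ (N : ℝ)⁻¹ * ∑ j, (E j).indicator 1 ω := by
  refine mul_le_mul_of_nonneg_left (Finset.sum_le_sum fun j _ => ?_) (by positivity)
  split_ifs with hj
  · simp [hE j ω hj]
  · exact Set.indicator_nonneg (fun _ _ => zero_le_one) ω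

section Model

variable {M N L : ℕ} {q : Fin M → Fin N → ℝ} {p : Fin M → Fin L → Fin L → ℝ}
  {j : Fin N} {k : Fin L}

@[simp] lemma condLaw_zero (i : Fin M) (j : Fin N) (k : Fin L) :
    condLaw q p i j k 0 = 1 - q i j := by
  simp [condLaw]

@[simp] lemma condLaw_succ (i : Fin M) (j : Fin N) (k s : Fin L) :
    condLaw q p i j k s.succ = q i j * p i k s := by
  simp [condLaw, Fin.succ_ne_zero]

lemma condLaw_nonneg (hq0 : ∀ i j, 0 ≤ q i j) (hq1 : ∀ i j, q i j ≤ 1)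
    (hp0 : ∀ i k h, 0 ≤ p i k h) (i : Fin M) (j : Fin N) (k : Fin L) (s : Fin (L + 1)) :
    0 ≤ condLaw q p i j k s := by
  cases s using Fin.cases with
  | zero => simpa using hq1 i j
  | succ s => simpa using mul_nonneg (hq0 i j) (hp0 i k s)

lemma sum_condLaw (hp1 : ∀ i k, ∑ h, p i k h = 1) (i : Fin M) (j : Fin N) (k : Fin L) :
    ∑ s, condLaw q p i j k s = 1 := by
  simp [Fin.sum_univ_succ, ← Finset.mul_sum, hp1]

/-- The conditional law of the worker labels `(Z i j)_i` given `y j = k`. -/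
def workerLaw (q : Fin M → Fin N → ℝ) (p : Fin M → Fin L → Fin L → ℝ) (j : Fin N)
    (k : Fin L) : Measure (Fin M → Fin (L + 1)) :=
  Measure.pi fun i => weightMeasure (condLaw q p i j k)

instance : IsFiniteMeasure (workerLaw q p j k) := by
  unfold workerLaw
  infer_instance

lemma workerLaw_real_singleton (hw0 : ∀ i s, 0 ≤ condLaw q p i j k s)
    (h : Fin M → Fin (L + 1)) :
    (workerLaw q p j k).real {h} = ∏ i, condLaw q p i j k (h i) := by
  rw [workerLaw, measureReal_def, Measure.pi_singleton, ENNReal.toReal_prod]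
  exact Finset.prod_congr rfl fun i _ => weightMeasure_real_singleton (hw0 i) (h i)

lemma measureReal_label_eq_and_mem {Ω : Type*} [MeasurableSpace Ω] {μ : Measure Ω}
    [IsFiniteMeasure μ] {y : Fin N → Ω → Fin L} {Z : Fin M → Fin N → Ω → Fin (L + 1)}
    (hZm : ∀ i j, Measurable (Z i j)) {pri : Fin L → ℝ}
    (hlaw : ∀ (j : Fin N) (k : Fin L) (h : Fin M → Fin (L + 1)),
      (μ {ω | y j ω = k ∧ ∀ i, Z i j ω = h i}).toReal
        = pri k * ∏ i, condLaw q p i j k (h i))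
    (hw0 : ∀ i s, 0 ≤ condLaw q p i j k s) (A : Set (Fin M → Fin (L + 1))) :
    μ.real {ω | y j ω = k ∧ (fun i => Z i j ω) ∈ A}
      = pri k * (workerLaw q p j k).real A := by
  classical
  have hZj : Measurable fun ω i => Z i j ω := measurable_pi_lambda _ fun i => hZm i j
  have hfiber : ∀ h, (μ.restrict {ω | y j ω = k}).real ((fun ω i => Z i j ω) ⁻¹' {h})
      = pri k * (workerLaw q p j k).real {h} := by
    intro h
    rw [measureReal_restrict_apply (hZj (measurableSet_singleton h)),
      workerLaw_real_singleton hw0, ← hlaw, measureReal_def]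
    congr 2
    ext ω
    simp [funext_iff, and_comm]
  rw [← Set.coe_toFinset A, ← sum_measureReal_singleton, Finset.mul_sum,
    ← Finset.sum_congr rfl fun h _ => hfiber h,
    sum_measureReal_preimage_singleton _ fun h _ => hZj (measurableSet_singleton h),
    measureReal_restrict_apply (hZj A.toFinset.measurableSet)]
  congr 1
  ext ω
  simp [and_comm]

variable {f : Fin M → Fin L → Fin (L + 1) → ℝ} {a : Fin L → ℝ}

def spread (f : Fin M → Fin L → Fin (L + 1) → ℝ) (i : Fin M) : ℝ :=
  sSup {x : ℝ | ∃ k l h : Fin L, k ≠ l ∧ x = |f i k h.succ - f i l h.succ|}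

lemma nbar_eq_sqrt_sum_spread : nbar f = √(∑ i, spread f i ^ 2) := rfl

lemma abs_sub_le_spread (hf0 : ∀ i k k', f i k 0 = f i k' 0) (i : Fin M) (k l : Fin L)
    (s : Fin (L + 1)) : |f i k s - f i l s| ≤ spread f i := by
  have hspread : 0 ≤ spread f i := Real.sSup_nonneg <| by
    rintro _ ⟨k, l, h, -, rfl⟩
    exact abs_nonneg _
  cases s using Fin.cases with
  | zero => simpa [hf0 i k l] using hspread
  | succ s =>
    rcases eq_or_ne k l with rfl | hkl
    · simpa using hspread
    refine le_csSup ((Set.finite_range fun t : Fin L × Fin L × Fin L =>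
      |f i t.1 t.2.2.succ - f i t.2.1 t.2.2.succ|).subset ?_).bddAbove ⟨k, l, s, hkl, rfl⟩
    rintro _ ⟨k, l, h, -, rfl⟩
    exact ⟨(k, l, h), rfl⟩

lemma tbar_le_gap_div_nbar (j : Fin N) {k l : Fin L} (hkl : k ≠ l) :
    tbar f a q p ≤ gap f a q p j k l / nbar f := by
  calc tbar f a q p ≤ tauMin f a q p j := csInf_le ?_ ⟨j, rfl⟩
    _ ≤ gap f a q p j k l / nbar f := csInf_le ?_ ⟨k, l, hkl, rfl⟩
  · refine ((Set.finite_range (tauMin f a q p)).subset ?_).bddBelow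
    rintro _ ⟨j, rfl⟩
    exact ⟨j, rfl⟩
  · refine ((Set.finite_range fun t : Fin L × Fin L => gap f a q p j t.1 t.2 / nbar f).subset
      ?_).bddBelow
    rintro _ ⟨k, l, -, rfl⟩
    exact ⟨(k, l), rfl⟩

lemma sum_integral_score_diff (hw0 : ∀ i s, 0 ≤ condLaw q p i j k s)
    (hf0 : ∀ i k k', f i k 0 = f i k' 0) (l : Fin L) :
    ∑ i, ∫ s, (f i l s - f i k s) ∂weightMeasure (condLaw q p i j k)
      = (a k - a l) - gap f a q p j k l := by
  simp only [integral_weightMeasure (hw0 _), Fin.sum_univ_succ, hf0 _ l k, sub_self, mul_zero,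
    zero_add, condLaw_succ, gap]
  have hneg : ∀ i h, q i j * (f i k h.succ - f i l h.succ) * p i k h
      = -(q i j * p i k h * (f i l h.succ - f i k h.succ)) := fun _ _ => by ring
  simp only [hneg, Finset.sum_neg_distrib]
  ring

lemma workerLaw_real_score_le_le_phi_tbar (hw0 : ∀ i s, 0 ≤ condLaw q p i j k s)
    (hw1 : ∀ i, ∑ s, condLaw q p i j k s = 1) (hf0 : ∀ i k k', f i k 0 = f i k' 0)
    (hT : 0 < tbar f a q p) {l : Fin L} (hkl : k ≠ l) :
    (workerLaw q p j k).real {h | ∑ i, f i k (h i) + a k ≤ ∑ i, f i l (h i) + a l}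
      ≤ phi (tbar f a q p) := by
  have := fun i => isProbabilityMeasure_weightMeasure (hw0 i) (hw1 i)
  have hTg := tbar_le_gap_div_nbar (f := f) (a := a) (q := q) (p := p) j hkl
  have hratio : 0 < gap f a q p j k l / nbar f := hT.trans_le hTg
  have hnbar0 : 0 ≤ nbar f := Real.sqrt_nonneg _
  obtain ⟨hgap, -⟩ := (div_pos_iff.1 hratio).resolve_right fun h => h.2.not_ge hnbar0
  have hset : {h : Fin M → Fin (L + 1) | ∑ i, f i k (h i) + a k ≤ ∑ i, f i l (h i) + a l}
      = {h | gap f a q p j k l ≤ ∑ i, ((f i l (h i) - f i k (h i))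
          - ∫ s, (f i l s - f i k s) ∂weightMeasure (condLaw q p i j k))} := by
    ext h
    simp only [Set.mem_ofPred_eq, Finset.sum_sub_distrib, sum_integral_score_diff (a := a) hw0 hf0]
    constructor <;> intro <;> linarith
  calc (workerLaw q p j k).real _
      ≤ exp (-gap f a q p j k l ^ 2 / (2 * ∑ i, spread f i ^ 2)) := by
        rw [hset]
        exact measureReal_pi_sum_sub_integral_ge_le _ (fun i => measurable_of_finite _)
          (fun i s => abs_sub_le_spread hf0 i l k s) hgap.le
    _ = phi (gap f a q p j k l / nbar f) := by
        rw [phi, div_pow, nbar_eq_sqrt_sum_spread,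
          sq_sqrt (Finset.sum_nonneg fun i _ => sq_nonneg _)]
        ring_nf
    _ ≤ phi (tbar f a q p) := phi_le_phi hT.le hTg

def misranked (f : Fin M → Fin L → Fin (L + 1) → ℝ) (a : Fin L → ℝ) :
    Set (Fin L × (Fin M → Fin (L + 1))) :=
  {v | ∃ l ≠ v.1, ∑ i, f i v.1 (v.2 i) + a v.1 ≤ ∑ i, f i l (v.2 i) + a l}

lemma measureReal_misranked_le {Ω : Type*} [MeasurableSpace Ω] {μ : Measure Ω}
    [IsProbabilityMeasure μ] {y : Fin N → Ω → Fin L}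
    {Z : Fin M → Fin N → Ω → Fin (L + 1)}
    (hym : ∀ j, Measurable (y j)) (hZm : ∀ i j, Measurable (Z i j)) {pri : Fin L → ℝ}
    (hpri : ∀ k, 0 ≤ pri k) (hprior : ∀ k, (μ {ω | y j ω = k}).toReal = pri k)
    (hlaw : ∀ (j : Fin N) (k : Fin L) (h : Fin M → Fin (L + 1)),
      (μ {ω | y j ω = k ∧ ∀ i, Z i j ω = h i}).toReal
        = pri k * ∏ i, condLaw q p i j k (h i))
    (hw0 : ∀ i k s, 0 ≤ condLaw q p i j k s) (hw1 : ∀ i k, ∑ s, condLaw q p i j k s = 1)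
    (hf0 : ∀ i k k', f i k 0 = f i k' 0) (hT : 0 < tbar f a q p) :
    μ.real ((fun ω => (y j ω, fun i => Z i j ω)) ⁻¹' misranked f a)
      ≤ (L - 1) * phi (tbar f a q p) := by
  set E : Fin L → Fin L → Set Ω := fun k l => {ω | y j ω = k ∧ (fun i => Z i j ω) ∈
    {h | ∑ i, f i k (h i) + a k ≤ ∑ i, f i l (h i) + a l}}
  have hcover : (fun ω => (y j ω, fun i => Z i j ω)) ⁻¹' misranked f a
      ⊆ ⋃ k ∈ Finset.univ, ⋃ l ∈ Finset.univ.erase k, E k l := by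
    rintro ω ⟨l, hl, hle⟩
    simp only [Set.mem_iUnion, Finset.mem_erase]
    exact ⟨y j ω, Finset.mem_univ _, l, ⟨hl, Finset.mem_univ _⟩, rfl, hle⟩
  have hsum_pri : ∑ k, pri k = 1 := by
    simp_rw [← hprior, ← measureReal_def]
    change ∑ k, μ.real (y j ⁻¹' {k}) = 1
    rw [sum_measureReal_preimage_singleton (μ := μ) Finset.univ
      (fun k _ => hym j (measurableSet_singleton k)) fun _ _ => measure_ne_top μ _]
    simp
  calc μ.real _ ≤ ∑ k, ∑ l ∈ Finset.univ.erase k, μ.real (E k l) :=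
        (measureReal_mono hcover (measure_ne_top μ _)).trans <|
          (measureReal_biUnion_finset_le _ _).trans <|
            Finset.sum_le_sum fun k _ => measureReal_biUnion_finset_le _ _
    _ ≤ ∑ k, ∑ l ∈ Finset.univ.erase k, pri k * phi (tbar f a q p) := by
        gcongr with k _ l hl
        rw [measureReal_label_eq_and_mem hZm hlaw (hw0 · k)]
        exact mul_le_mul_of_nonneg_left (workerLaw_real_score_le_le_phi_tbar (hw0 · k) (hw1 · k)
          hf0 hT (Finset.ne_of_mem_erase hl).symm) (hpri k)
    _ = (L - 1) * phi (tbar f a q p) := by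
        have hL : 1 ≤ L := Nat.one_le_iff_ne_zero.2 fun h => by subst h; simp at hsum_pri
        simp only [Finset.sum_const, Finset.card_erase_of_mem (Finset.mem_univ _),
          Finset.card_univ, Fintype.card_fin, nsmul_eq_mul, ← Finset.mul_sum, ← Finset.sum_mul,
          hsum_pri, Nat.cast_sub hL]
        ring

end Model

end CrowdDS

theorem error_rate_upper_bound_high_prob_general
    {Ω : Type*} [MeasurableSpace Ω] (μ : Measure Ω) [IsProbabilityMeasure μ]
    {M N L : ℕ} (hN : 0 < N) (hL : 2 ≤ L)
    (y : Fin N → Ω → Fin L) (Z : Fin M → Fin N → Ω → Fin (L + 1))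
    (hym : ∀ j, Measurable (y j)) (hZm : ∀ i j, Measurable (Z i j))
    (pri : Fin L → ℝ) (q : Fin M → Fin N → ℝ) (p : Fin M → Fin L → Fin L → ℝ)
    (hpri : ∀ k, 0 ≤ pri k) (hq0 : ∀ i j, 0 ≤ q i j) (hq1 : ∀ i j, q i j ≤ 1)
    (hp0 : ∀ i k h, 0 ≤ p i k h) (hp1 : ∀ i k, ∑ h, p i k h = 1)
    (hprior : ∀ (j : Fin N) (k : Fin L), (μ {ω | y j ω = k}).toReal = pri k)
    (hlaw : ∀ (j : Fin N) (k : Fin L) (h : Fin M → Fin (L + 1)),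
      (μ {ω | y j ω = k ∧ ∀ i, Z i j ω = h i}).toReal
        = pri k * ∏ i, CrowdDS.condLaw q p i j k (h i))
    (hindep : iIndepFun (fun j ω => (y j ω, fun i => Z i j ω)) μ)
    (f : Fin M → Fin L → Fin (L + 1) → ℝ) (hf0 : ∀ i k k', f i k 0 = f i k' 0)
    (a : Fin L → ℝ)
    (yhat : Fin N → Ω → Fin L)
    (hyhat : ∀ (j : Fin N) (ω : Ω) (k : Fin L),
      (∑ i, f i k (Z i j ω)) + a k ≤ (∑ i, f i (yhat j ω) (Z i j ω)) + a (yhat j ω))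
    {ε : ℝ} (hε0 : 0 < ε) (hε1 : ε < 1)
    (ht : Real.sqrt (2 * Real.log (((L : ℝ) - 1) / ε)) ≤ CrowdDS.tbar f a q p) :
    1 - Real.exp (-(N : ℝ) *
        CrowdDS.klBer ε (((L : ℝ) - 1) * CrowdDS.phi (CrowdDS.tbar f a q p)))
      ≤ (μ {ω | CrowdDS.errRate y yhat ω ≤ ε}).toReal := by
  set T := CrowdDS.tbar f a q p
  have hL1 : (1 : ℝ) ≤ L - 1 := by
    have : (2 : ℝ) ≤ L := by exact_mod_cast hL
    linarith
  have hT : 0 < T := CrowdDS.pos_of_sqrt_two_log_le hε0 (by linarith) ht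
  have hρε : ((L : ℝ) - 1) * CrowdDS.phi T ≤ ε :=
    CrowdDS.mul_phi_le_of_sqrt_two_log_le (by linarith) hε0 ht
  set E : Fin N → Set Ω :=
    fun j => (fun ω => (y j ω, fun i => Z i j ω)) ⁻¹' CrowdDS.misranked f a
  have hEm : ∀ j, MeasurableSet (E j) := fun j =>
    ((hym j).prodMk (measurable_pi_lambda _ fun i => hZm i j)) MeasurableSet.of_discrete
  have hE : ∀ j, μ.real (E j) ≤ (L - 1) * CrowdDS.phi T := fun j =>
    CrowdDS.measureReal_misranked_le hym hZm hpri (hprior j) hlaw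
      (CrowdDS.condLaw_nonneg hq0 hq1 hp0 · j) (fun i k => CrowdDS.sum_condLaw hp1 i j k) hf0 hT
  have hindepE : iIndepFun (fun j => (E j).indicator (1 : Ω → ℝ)) μ :=
    hindep.comp (fun _ => (CrowdDS.misranked f a).indicator 1) fun _ => Measurable.of_discrete
  have htail := CrowdDS.measureReal_sum_indicator_ge_le_exp_klBer hEm hindepE hE
    (mul_pos (by linarith) (exp_pos _)) hρε hε1
  rw [Fintype.card_fin] at htail
  refine le_trans (by linarith) (CrowdDS.one_sub_measureReal_le_of_compl_subset
    fun ω (hω : ¬ _ ≤ ε) => ?_)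
  have hlt := (not_le.1 hω).trans_le (CrowdDS.errRate_le_inv_mul_sum_indicator (E := E)
    (fun j ω hj => ⟨yhat j ω, hj, hyhat j ω _⟩) ω)
  exact ((lt_inv_mul_iff₀ (by exact_mod_cast hN)).1 hlt).le

/-- Under the general Dawid–Skene model with a decomposable aggregation
rule: for every `ε ∈ (0,1)`, if `t̄ ≥ sqrt(2 ln((L−1)/ε))`, then with probability at least
`1 − exp(−N · D(ε ‖ (L−1) φ(t̄)))` the error rate satisfies `E_N ≤ ε`. -/
theorem error_rate_upper_bound_high_prob
    {Ω : Type*} [MeasurableSpace Ω] (μ : Measure Ω) [IsProbabilityMeasure μ]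
    {M N L : ℕ} (hM : 0 < M) (hN : 0 < N) (hL : 2 ≤ L)
    (y : Fin N → Ω → Fin L) (Z : Fin M → Fin N → Ω → Fin (L + 1))
    (hym : ∀ j, Measurable (y j)) (hZm : ∀ i j, Measurable (Z i j))
    (pri : Fin L → ℝ) (q : Fin M → Fin N → ℝ) (p : Fin M → Fin L → Fin L → ℝ)
    (hpri : ∀ k, 0 ≤ pri k) (hq0 : ∀ i j, 0 ≤ q i j) (hq1 : ∀ i j, q i j ≤ 1)
    (hp0 : ∀ i k h, 0 ≤ p i k h) (hp1 : ∀ i k, ∑ h, p i k h = 1)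
    (hprior : ∀ (j : Fin N) (k : Fin L), (μ {ω | y j ω = k}).toReal = pri k)
    (hlaw : ∀ (j : Fin N) (k : Fin L) (h : Fin M → Fin (L + 1)),
      (μ {ω | y j ω = k ∧ ∀ i, Z i j ω = h i}).toReal
        = pri k * ∏ i, CrowdDS.condLaw q p i j k (h i))
    (hindep : iIndepFun (fun j ω => (y j ω, fun i => Z i j ω)) μ)
    (f : Fin M → Fin L → Fin (L + 1) → ℝ) (hf0 : ∀ i k k', f i k 0 = f i k' 0)
    (a : Fin L → ℝ)
    (yhat : Fin N → Ω → Fin L) (hyhatm : ∀ j, Measurable (yhat j))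
    (hyhat : ∀ (j : Fin N) (ω : Ω) (k : Fin L),
      (∑ i, f i k (Z i j ω)) + a k ≤ (∑ i, f i (yhat j ω) (Z i j ω)) + a (yhat j ω))
    {ε : ℝ} (hε0 : 0 < ε) (hε1 : ε < 1)
    (ht : Real.sqrt (2 * Real.log (((L : ℝ) - 1) / ε)) ≤ CrowdDS.tbar f a q p) :
    1 - Real.exp (-(N : ℝ) *
        CrowdDS.klBer ε (((L : ℝ) - 1) * CrowdDS.phi (CrowdDS.tbar f a q p)))
      ≤ (μ {ω | CrowdDS.errRate y yhat ω ≤ ε}).toReal :=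
  error_rate_upper_bound_high_prob_general μ hN hL y Z hym hZm pri q p hpri hq0 hq1 hp0 hp1 hprior
    hlaw hindep f hf0 a yhat hyhat hε0 hε1 ht
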